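/- arXiv:1911.11628 — 2 statements merged into one kernel-verified Lean document; each statement's English description precedes it below -/
import Mathlib

section
/- Let σ : ℝⁿ → ℝ^{n×m} be of class C¹, u ∈ C²(ℝⁿ), a₁, a₂ ∈ B₁(0) ⊂ ℝᵐ, and x₀ ∈ ℝⁿ. For each t > 0 let x^t be the single-switch trajectory with data (σa₁, σa₂, t, x₀). Then as t → 0⁺: u(x^t(2t)) − u(x₀) = ∇u(x₀)·σ(x₀)(a₁+a₂) t + K(x₀)(a₁,a₂)·(a₁,a₂) t²/2 + o(t²). If in particular ∇u(x₀)·σ(x₀)a₁ = ∇u(x₀)·σ(x₀)a₂ = 0, then u(x^t(2t)) − u(x₀) = K(x₀)(a₁,a₂)·(a₁,a₂) t²/2 + o(t²). -/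
open Set Filter Metric Matrix MeasureTheory Asymptotics
open scoped RealInnerProductSpace ENNReal Topology

noncomputable section

/-- Euclidean `n`-space. -/
abbrev Euc (n : ℕ) : Type := EuclideanSpace ℝ (Fin n)

/-- The Lie bracket `[f,g](x) = Dg(x) f(x) - Df(x) g(x)`. -/
def lieBracket {n : ℕ} (f g : Euc n → Euc n) (x : Euc n) : Euc n :=
  fderiv ℝ g x (f x) - fderiv ℝ f x (g x)

/-- Second-order Hamiltonian `H_{f,g} u (x) = ∇(∇u·g)(x) · f(x)`. -/
def H2 {n : ℕ} (f g : Euc n → Euc n) (u : Euc n → ℝ) (x : Euc n) : ℝ :=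
  fderiv ℝ (fun y => ⟪gradient u y, g y⟫) x (f x)

/-- Single-switch trajectory with data `(f, g, t, x₀)`: Carathéodory solution following `f`
on `[0,t)` and `g` on `[t,2t]`, starting at `x₀`. -/
def IsSwitchTraj {n : ℕ} (f g : Euc n → Euc n) (t : ℝ) (x₀ : Euc n) (x : ℝ → Euc n) : Prop :=
  x 0 = x₀ ∧ ContinuousOn x (Icc 0 (2 * t)) ∧
    (∀ s ∈ Ioo (0 : ℝ) t, HasDerivAt x (f (x s)) s) ∧
    (∀ s ∈ Ioo t (2 * t), HasDerivAt x (g (x s)) s)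

/-- Piecewise continuity: on every bounded interval, continuity off a finite set. -/
def PiecewiseContinuous {m : ℕ} (a : ℝ → Euc m) : Prop :=
  ∀ T > (0 : ℝ), ∃ D : Finset ℝ, ∀ t ∈ Icc (0 : ℝ) T, t ∉ D → ContinuousAt a t

/-- Admissible control with values in the control set `A`. -/
def IsControl {m : ℕ} (A : Set (Euc m)) (a : ℝ → Euc m) : Prop :=
  (∀ s, a s ∈ A) ∧ PiecewiseContinuous a

/-- Carathéodory trajectory of the control system `ẋ = f(x,a)`. -/
def IsTraj {n m : ℕ} (f : Euc n → Euc m → Euc n) (A : Set (Euc m))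
    (a : ℝ → Euc m) (x : ℝ → Euc n) : Prop :=
  IsControl A a ∧ ContinuousOn x (Ici 0) ∧
    ∀ t : ℝ, 0 ≤ t → x t = x 0 + ∫ s in (0 : ℝ)..t, f (x s) (a s)

/-- Points from which the target `𝒯` can be reached within time `t`. -/
def ReachSet {n m : ℕ} (f : Euc n → Euc m → Euc n) (A : Set (Euc m)) (𝒯 : Set (Euc n))
    (t : ℝ) : Set (Euc n) :=
  {x₀ | ∃ (a : ℝ → Euc m) (x : ℝ → Euc n) (t' : ℝ),
    IsTraj f A a x ∧ x 0 = x₀ ∧ 0 ≤ t' ∧ t' ≤ t ∧ x t' ∈ 𝒯}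

/-- Minimum time function, valued in `ℝ≥0∞`. -/
def minTime {n m : ℕ} (f : Euc n → Euc m → Euc n) (A : Set (Euc m)) (𝒯 : Set (Euc n))
    (x₀ : Euc n) : ℝ≥0∞ :=
  sInf {θ : ℝ≥0∞ | ∃ (a : ℝ → Euc m) (x : ℝ → Euc n) (t : ℝ),
    IsTraj f A a x ∧ x 0 = x₀ ∧ 0 ≤ t ∧ x t ∈ 𝒯 ∧ θ = ENNReal.ofReal t}

/-- Small time local attainability of the target `𝒯` at `xbar`. -/
def STLA {n m : ℕ} (f : Euc n → Euc m → Euc n) (A : Set (Euc m)) (𝒯 : Set (Euc n))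
    (xbar : Euc n) : Prop :=
  ∀ t > (0 : ℝ), xbar ∈ interior (ReachSet f A 𝒯 t)

/-- `C^k` controlled vector field: `C^k` in `x` with spatial derivatives jointly continuous. -/
def VFieldC {n m : ℕ} (k : ℕ) (f : Euc n → Euc m → Euc n) : Prop :=
  (∀ a, ContDiff ℝ k fun x => f x a) ∧
    ∀ i ≤ k, Continuous fun p : Euc n × Euc m => iteratedFDeriv ℝ i (fun x => f x p.2) p.1

/-- The second-order controllability expression
`-D²u(x) f(x,a₁)·f(x,a₂) - (D(f(·,a₁)+f(·,a₂))(x)(f(x,a₁)+f(x,a₂)) + [f(·,a₁),f(·,a₂)](x))·∇u(x)`. -/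
def SOexpr {n m : ℕ} (f : Euc n → Euc m → Euc n) (u : Euc n → ℝ) (x : Euc n)
    (a₁ a₂ : Euc m) : ℝ :=
  -⟪fderiv ℝ (gradient u) x (f x a₁), f x a₂⟫ -
    ⟪gradient u x,
      fderiv ℝ (fun y => f y a₁ + f y a₂) x (f x a₁ + f x a₂) +
        lieBracket (fun y => f y a₁) (fun y => f y a₂) x⟫

/-- The target is reached with a piecewise constant control with at most one switch. -/
def ReachOneSwitch {n m : ℕ} (f : Euc n → Euc m → Euc n) (A : Set (Euc m)) (𝒯 : Set (Euc n))
    (x₀ : Euc n) : Prop :=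
  ∃ a₁ ∈ A, ∃ a₂ ∈ A, ∃ ts tf : ℝ, 0 ≤ ts ∧ ts ≤ tf ∧
    ∃ x : ℝ → Euc n, IsTraj f A (fun s => if s < ts then a₁ else a₂) x ∧ x 0 = x₀ ∧ x tf ∈ 𝒯

/-- The matrix `S(x) = D(∇u σ)(x) σ(x)`, i.e. `S_{ij}(x) = ∇(∇u·σᵢ)(x)·σⱼ(x)`. -/
def Smat {n m : ℕ} (σ : Fin m → Euc n → Euc n) (u : Euc n → ℝ) (x : Euc n) :
    Matrix (Fin m) (Fin m) ℝ :=
  Matrix.of fun i j => fderiv ℝ (fun y => ⟪gradient u y, σ i y⟫) x (σ j x)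

/-- The symmetric block matrix `K = [[S*, ᵗS],[S, S*]]` built from a square matrix `S`. -/
def Kof {m : ℕ} (S : Matrix (Fin m) (Fin m) ℝ) :
    Matrix (Fin m ⊕ Fin m) (Fin m ⊕ Fin m) ℝ :=
  Matrix.fromBlocks ((2 : ℝ)⁻¹ • (S + Sᵀ)) Sᵀ S ((2 : ℝ)⁻¹ • (S + Sᵀ))

/-- The matrix `K(x)` associated to `σ` and `u`. -/
def Kmat {n m : ℕ} (σ : Fin m → Euc n → Euc n) (u : Euc n → ℝ) (x : Euc n) :
    Matrix (Fin m ⊕ Fin m) (Fin m ⊕ Fin m) ℝ :=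
  Kof (Smat σ u x)

/-- Symmetric system vector field `f(x,a) = σ(x) a`. -/
def symF {n m : ℕ} (σ : Fin m → Euc n → Euc n) : Euc n → Euc m → Euc n :=
  fun x a => ∑ j, a j • σ j x

/-- Nonlinear affine system vector field `f(x,a) = σ₀(x) + σ(x) a`. -/
def affF {n m : ℕ} (σ₀ : Euc n → Euc n) (σ : Fin m → Euc n → Euc n) :
    Euc n → Euc m → Euc n :=
  fun x a => σ₀ x + ∑ j, a j • σ j x

end

/-!
Along a single-switch trajectory of `(f, g, t, x₀)` both arcs stay within `o(t)` of the broken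
line `x₀ + s f(x₀)`, `x₀ + t f(x₀) + (s - t) g(x₀)`, uniformly in `s`: for small `t` the
trajectory cannot leave a ball around `x₀` on which `f` and `g` are close to `f(x₀)` and `g(x₀)`.
Along the arcs `u` has derivative `∇u·f` resp. `∇u·g` at the current point, and the first-order
Taylor expansion of these two functions at `x₀` makes that derivative affine in `s` up to `o(t)`.
Integrating over the two arcs of length `t` gives
`u(x(2t)) - u(x₀) = t (∇u·f + ∇u·g)(x₀) + t² (H_{f,f}/2 + H_{f,g} + H_{g,g}/2) u(x₀) + o(t²)`,
and for `f = σa₁`, `g = σa₂` the quadratic form of `K(x₀)` at `(a₁, a₂)` is twice the bracket.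
-/

section

variable {E : Type*} [NormedAddCommGroup E] [NormedSpace ℝ E]

theorem norm_sub_le_of_hasDerivAt_Ioo {y y' : ℝ → E} {a b C : ℝ} (hab : a ≤ b)
    (hy : ContinuousOn y (Icc a b)) (hy' : ∀ s ∈ Ioo a b, HasDerivAt y (y' s) s)
    (hC : ∀ s ∈ Ioo a b, ‖y' s‖ ≤ C) : ‖y b - y a‖ ≤ C * (b - a) := by
  rcases hab.eq_or_lt with rfl | hlt
  · simp
  obtain ⟨ℓ, hℓ, hℓy⟩ := exists_dual_vector'' ℝ (y b - y a)
  obtain ⟨c, hc, hslope⟩ := exists_hasDerivAt_eq_slope (ℓ ∘ y) (fun s => ℓ (y' s)) hlt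
    (ℓ.continuous.comp_continuousOn hy) fun s hs => ℓ.hasFDerivAt.comp_hasDerivAt s (hy' s hs)
  have hℓc : ℓ (y' c) ≤ C := calc
    ℓ (y' c) ≤ ‖ℓ‖ * ‖y' c‖ := (le_abs_self _).trans (ℓ.le_opNorm _)
    _ ≤ 1 * C := mul_le_mul hℓ (hC c hc) (norm_nonneg _) zero_le_one
    _ = C := one_mul C
  calc ‖y b - y a‖ = ℓ (y' c) * (b - a) := by
        rw [hslope, div_mul_cancel₀ _ (sub_ne_zero.2 hlt.ne')]
        simpa using hℓy.symm
    _ ≤ C * (b - a) := mul_le_mul_of_nonneg_right hℓc (sub_nonneg.2 hlt.le)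

theorem norm_sub_sub_smul_le_of_forall_mem_ball {f : E → E} {x : ℝ → E} {c v : E}
    {a b r ε : ℝ} (hε : 0 ≤ ε) (hf : ∀ y ∈ ball c r, ‖f y - v‖ ≤ ε)
    (hx : ContinuousOn x (Icc a b)) (hx' : ∀ s ∈ Ioo a b, HasDerivAt x (f (x s)) s)
    (hr : ‖x a - c‖ + (‖v‖ + ε) * (b - a) < r) :
    ∀ s ∈ Icc a b, ‖x s - x a - (s - a) • v‖ ≤ ε * (s - a) := by
  set S := {s | ‖x s - x a - (s - a) • v‖ ≤ ε * (s - a)}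
  have hclosed : IsClosed (S ∩ Icc a b) := by
    have hcont : ContinuousOn (fun s => ‖x s - x a - (s - a) • v‖ - ε * (s - a)) (Icc a b) := by
      fun_prop
    convert hcont.preimage_isClosed_of_isClosed isClosed_Icc (isClosed_Iic (a := 0)) using 1
    ext s
    simp [S, and_comm]
  -- Real induction: while the bound holds, `x` is still inside the open ball, so the bound on
  -- `f` persists a little longer and the mean value inequality carries the estimate further.
  refine fun _ hs => hclosed.Icc_subset_of_forall_mem_nhdsWithin (by simp [S]) ?_ hs
  rintro s ⟨hsS, hsI⟩
  have hxs : x s ∈ ball c r := by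
    have hsa : ‖x s - x a‖ ≤ (‖v‖ + ε) * (b - a) := calc
      ‖x s - x a‖ ≤ ‖(s - a) • v‖ + ‖x s - x a - (s - a) • v‖ := norm_le_norm_add_norm_sub' _ _
      _ ≤ (‖v‖ + ε) * (s - a) := by
        rw [norm_smul, Real.norm_of_nonneg (sub_nonneg.2 hsI.1)]
        linarith [show ‖x s - x a - (s - a) • v‖ ≤ ε * (s - a) from hsS]
      _ ≤ (‖v‖ + ε) * (b - a) := by gcongr; exact hsI.2.le
    rw [mem_ball, dist_eq_norm]
    linarith [norm_sub_le_norm_sub_add_norm_sub (x s) (x a) c]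
  have hev : {τ | x τ ∈ ball c r} ∩ Ioo s b ∈ 𝓝[>] s :=
    inter_mem (nhdsWithin_le_of_mem (Icc_mem_nhdsGT_of_mem hsI)
      ((hx s (Ico_subset_Icc_self hsI)).preimage_mem_nhdsWithin (isOpen_ball.mem_nhds hxs)))
      (Ioo_mem_nhdsGT hsI.2)
  obtain ⟨e, hse, he⟩ := mem_nhdsGT_iff_exists_Ioo_subset.1 hev
  refine mem_of_superset (Ioo_mem_nhdsGT hse) fun τ hτ => ?_
  have hτb : τ < b := (he hτ).2.2
  have hstep : ‖(x τ - τ • v) - (x s - s • v)‖ ≤ ε * (τ - s) :=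
    norm_sub_le_of_hasDerivAt_Ioo hτ.1.le
      ((hx.mono (Icc_subset_Icc hsI.1 hτb.le)).sub
        (continuous_id.smul continuous_const).continuousOn)
      (fun σ hσ => ((hx' σ ⟨hsI.1.trans_lt hσ.1, hσ.2.trans hτb⟩).sub
        ((hasDerivAt_id' σ).smul_const v)).congr_deriv (by simp))
      fun σ hσ => hf _ (he ⟨hσ.1, hσ.2.trans hτ.2⟩).1
  calc ‖x τ - x a - (τ - a) • v‖
        = ‖((x τ - τ • v) - (x s - s • v)) + (x s - x a - (s - a) • v)‖ := by
        congr 1; simp only [sub_smul]; abel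
    _ ≤ ε * (τ - s) + ε * (s - a) := norm_add_le_of_le hstep hsS
    _ = ε * (τ - a) := by ring

theorem abs_sub_sub_le_of_hasDerivAt_Ioo {h h' : ℝ → ℝ} {a b α β η : ℝ} (hab : a ≤ b)
    (hh : ContinuousOn h (Icc a b)) (hh' : ∀ s ∈ Ioo a b, HasDerivAt h (h' s) s)
    (hη : ∀ s ∈ Ioo a b, |h' s - (α + β * (s - a))| ≤ η) :
    |h b - h a - (α * (b - a) + β * (b - a) ^ 2 / 2)| ≤ η * (b - a) := by
  have hpoly : ∀ s, HasDerivAt (fun s => α * (s - a) + β * (s - a) ^ 2 / 2)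
      (α + β * (s - a)) s := fun s =>
    ((((hasDerivAt_id' s).sub_const a).const_mul α).add
      ((((hasDerivAt_id' s).sub_const a).pow 2).const_mul β |>.div_const 2)).congr_deriv
      (by ring)
  have := norm_sub_le_of_hasDerivAt_Ioo hab
    (hh.sub (by fun_prop : Continuous fun s => α * (s - a) + β * (s - a) ^ 2 / 2).continuousOn)
    (fun s hs => (hh' s hs).sub (hpoly s)) hη
  simpa [sub_sub, add_comm, add_left_comm, add_assoc] using this

/-- Pairs `(t, s)` with `t → 0⁺` and `s ∈ I t`: little-o along this filter is little-o as
`t → 0⁺`, uniformly in `s ∈ I t`. -/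
def arcFilter (I : ℝ → Set ℝ) : Filter (ℝ × ℝ) :=
  comap Prod.fst (𝓝[>] 0) ⊓ 𝓟 {p | p.2 ∈ I p.1}

theorem eventually_arcFilter {I : ℝ → Set ℝ} {P : ℝ × ℝ → Prop} :
    (∀ᶠ p in arcFilter I, P p) ↔ ∀ᶠ t in 𝓝[>] 0, ∀ s ∈ I t, P (t, s) := by
  simp only [arcFilter, eventually_inf_principal, eventually_comap, Prod.forall, mem_ofPred_eq]
  exact eventually_congr (Eventually.of_forall fun t =>
    ⟨fun h s hs => h t s rfl hs, fun h _ s ht hs => ht ▸ h s (ht ▸ hs)⟩)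

theorem tendsto_fst_arcFilter (I : ℝ → Set ℝ) : Tendsto Prod.fst (arcFilter I) (𝓝 0) :=
  (tendsto_comap.mono_left inf_le_left).mono_right nhdsWithin_le_nhds

theorem isBigO_smul_arcFilter (v : E) :
    (fun p : ℝ × ℝ => p.2 • v) =O[arcFilter fun t => Icc 0 t] Prod.fst :=
  IsBigO.of_bound ‖v‖ <| eventually_arcFilter.2 <| .of_forall fun t s hs => by
    rw [norm_smul, mul_comm, Real.norm_of_nonneg hs.1, Real.norm_of_nonneg (hs.1.trans hs.2)]
    exact mul_le_mul_of_nonneg_left hs.2 (norm_nonneg v)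

theorem isBigO_brokenLine_arcFilter (v w : E) :
    (fun p : ℝ × ℝ => p.1 • v + (p.2 - p.1) • w) =O[arcFilter fun t => Icc t (2 * t)] Prod.fst :=
  IsBigO.of_bound (‖v‖ + ‖w‖) <| eventually_arcFilter.2 <| .of_forall fun t s hs => by
    have ht : 0 ≤ t := by linarith [hs.1.trans hs.2]
    calc ‖t • v + (s - t) • w‖ ≤ t * ‖v‖ + (s - t) * ‖w‖ := by
          refine (norm_add_le _ _).trans_eq ?_
          rw [norm_smul, norm_smul, Real.norm_of_nonneg ht, Real.norm_of_nonneg (sub_nonneg.2 hs.1)]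
      _ ≤ (‖v‖ + ‖w‖) * ‖t‖ := by
          rw [Real.norm_of_nonneg ht]; nlinarith [hs.2, norm_nonneg w]

theorem HasFDerivAt.isLittleO_sub_sub_comp {α F : Type*} [NormedAddCommGroup F]
    [NormedSpace ℝ F] {φ : E → F} {L : E →L[ℝ] F}
    {x₀ : E} {l : Filter α} {y w : α → E} {τ : α → ℝ} (hφ : HasFDerivAt φ L x₀)
    (hy : (fun i => y i - x₀ - w i) =o[l] τ) (hw : w =O[l] τ) (hτ : Tendsto τ l (𝓝 0)) :
    (fun i => φ (y i) - φ x₀ - L (w i)) =o[l] τ := by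
  have hyx : (fun i => y i - x₀) =O[l] τ :=
    (hy.isBigO.add hw).congr_left fun i => sub_add_cancel _ _
  have hlim : Tendsto y l (𝓝 x₀) := by
    simpa using (hyx.trans_tendsto hτ).add_const x₀
  have hlin := (hφ.isLittleO.comp_tendsto hlim).trans_isBigO hyx
  have hdev := (L.isBigO_comp _ l).trans_isLittleO hy
  refine (hlin.add hdev).congr_left fun i => ?_
  simp only [Function.comp_apply, map_sub]
  abel

theorem isLittleO_sq_of_hasDerivAt_arc {h h' : ℝ → ℝ → ℝ} {a b α : ℝ → ℝ} {β : ℝ}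
    (hab : ∀ t, b t - a t = t) (hh : ∀ t > 0, ContinuousOn (h t) (Icc (a t) (b t)))
    (hh' : ∀ t > 0, ∀ s ∈ Ioo (a t) (b t), HasDerivAt (h t) (h' t s) s)
    (hd : (fun p : ℝ × ℝ => h' p.1 p.2 - (α p.1 + β * (p.2 - a p.1)))
      =o[arcFilter fun t => Icc (a t) (b t)] Prod.fst) :
    (fun t => h t (b t) - h t (a t) - (α t * t + β * t ^ 2 / 2)) =o[𝓝[>] 0] fun t => t ^ 2 := by
  refine isLittleO_iff.2 fun ε hε => ?_
  filter_upwards [eventually_arcFilter.1 (isLittleO_iff.1 hd hε), self_mem_nhdsWithin]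
    with t hd (ht : 0 < t)
  have := abs_sub_sub_le_of_hasDerivAt_Ioo (by linarith [hab t]) (hh t ht) (hh' t ht)
    fun s hs => hd s (Ioo_subset_Icc_self hs)
  rw [hab t] at this
  simpa [abs_of_pos ht, pow_two, mul_assoc] using this

theorem DifferentiableAt.hasDerivAt_comp_inner_gradient {F : Type*} [NormedAddCommGroup F]
    [InnerProductSpace ℝ F] [CompleteSpace F] {u : F → ℝ} {x : ℝ → F} {x' : F} {s : ℝ}
    (hu : DifferentiableAt ℝ u (x s)) (hx : HasDerivAt x x' s) :
    HasDerivAt (fun s => u (x s)) ⟪gradient u (x s), x'⟫ s := by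
  rw [inner_gradient_left]
  exact hu.hasFDerivAt.comp_hasDerivAt s hx

end

section

variable {n : ℕ}

theorem IsSwitchTraj.norm_sub_brokenLine_le {f g : Euc n → Euc n} {t r ε : ℝ} {x₀ : Euc n}
    {x : ℝ → Euc n} (hx : IsSwitchTraj f g t x₀ x) (ht : 0 < t) (hε : 0 ≤ ε)
    (hf : ∀ y ∈ ball x₀ r, ‖f y - f x₀‖ ≤ ε) (hg : ∀ y ∈ ball x₀ r, ‖g y - g x₀‖ ≤ ε)
    (htr : (‖f x₀‖ + ‖g x₀‖ + 2 * ε) * t < r) :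
    (∀ s ∈ Icc 0 t, ‖x s - x₀ - s • f x₀‖ ≤ ε * s) ∧
      ∀ s ∈ Icc t (2 * t), ‖x s - x₀ - (t • f x₀ + (s - t) • g x₀)‖ ≤ ε * s := by
  obtain ⟨hx0, hxc, hxf, hxg⟩ := hx
  have h₁ : ∀ s ∈ Icc 0 t, ‖x s - x₀ - s • f x₀‖ ≤ ε * s := by
    have := norm_sub_sub_smul_le_of_forall_mem_ball hε hf
      (hxc.mono (Icc_subset_Icc le_rfl (by linarith))) hxf
      (by rw [hx0, sub_self, norm_zero]; nlinarith [norm_nonneg (g x₀)])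
    simpa [hx0] using this
  have hxt : ‖x t - x₀‖ ≤ (‖f x₀‖ + ε) * t := by
    have := h₁ t ⟨ht.le, le_rfl⟩
    have hnorm : ‖t • f x₀‖ = t * ‖f x₀‖ := by rw [norm_smul, Real.norm_of_nonneg ht.le]
    linarith [norm_le_norm_add_norm_sub' (x t - x₀) (t • f x₀)]
  have h₂ := norm_sub_sub_smul_le_of_forall_mem_ball hε hg
    (hxc.mono (Icc_subset_Icc ht.le le_rfl)) hxg
    (by linarith : ‖x t - x₀‖ + (‖g x₀‖ + ε) * (2 * t - t) < r)
  refine ⟨h₁, fun s hs => ?_⟩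
  calc ‖x s - x₀ - (t • f x₀ + (s - t) • g x₀)‖
      = ‖(x s - x t - (s - t) • g x₀) + (x t - x₀ - t • f x₀)‖ := by congr 1; abel
    _ ≤ ε * (s - t) + ε * t := norm_add_le_of_le (h₂ s hs) (h₁ t ⟨ht.le, le_rfl⟩)
    _ = ε * s := by ring

theorem isLittleO_switchTraj_sub_brokenLine {f g : Euc n → Euc n} {x₀ : Euc n}
    {X : ℝ → ℝ → Euc n} (hf : ContinuousAt f x₀) (hg : ContinuousAt g x₀)
    (hX : ∀ t > 0, IsSwitchTraj f g t x₀ (X t)) :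
    (fun p : ℝ × ℝ => X p.1 p.2 - x₀ - p.2 • f x₀) =o[arcFilter fun t => Icc 0 t] Prod.fst ∧
      (fun p : ℝ × ℝ => X p.1 p.2 - x₀ - (p.1 • f x₀ + (p.2 - p.1) • g x₀))
        =o[arcFilter fun t => Icc t (2 * t)] Prod.fst := by
  have key : ∀ ε > 0, ∀ᶠ t in 𝓝[>] 0,
      (∀ s ∈ Icc 0 t, ‖X t s - x₀ - s • f x₀‖ ≤ ε * ‖t‖) ∧
      ∀ s ∈ Icc t (2 * t), ‖X t s - x₀ - (t • f x₀ + (s - t) • g x₀)‖ ≤ ε * ‖t‖ := by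
    intro ε hε
    obtain ⟨r, hr, hball⟩ := Metric.eventually_nhds_iff_ball.1
      ((Metric.tendsto_nhds.1 hf (ε / 2) (by positivity)).and
        (Metric.tendsto_nhds.1 hg (ε / 2) (by positivity)))
    have hK : 0 < ‖f x₀‖ + ‖g x₀‖ + 2 * (ε / 2) := by positivity
    filter_upwards [Ioo_mem_nhdsGT (div_pos hr hK)] with t ⟨ht, htr⟩
    obtain ⟨h₁, h₂⟩ := (hX t ht).norm_sub_brokenLine_le (ε := ε / 2) ht (by positivity)
      (fun y hy => by simpa [dist_eq_norm] using (hball y hy).1.le)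
      (fun y hy => by simpa [dist_eq_norm] using (hball y hy).2.le)
      (by rwa [lt_div_iff₀ hK, mul_comm] at htr)
    rw [Real.norm_of_nonneg ht.le]
    exact ⟨fun s hs => (h₁ s hs).trans (by nlinarith [hs.2]),
      fun s hs => (h₂ s hs).trans (by nlinarith [hs.2])⟩
  exact ⟨isLittleO_iff.2 fun ε hε => eventually_arcFilter.2 ((key ε hε).mono fun _ h => h.1),
    isLittleO_iff.2 fun ε hε => eventually_arcFilter.2 ((key ε hε).mono fun _ h => h.2)⟩

theorem isLittleO_switchTraj_expansion {f g : Euc n → Euc n} {u : Euc n → ℝ} {x₀ : Euc n}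
    {X : ℝ → ℝ → Euc n} (hf : ContinuousAt f x₀) (hg : ContinuousAt g x₀)
    (hu : Differentiable ℝ u) (hφ : DifferentiableAt ℝ (fun y => ⟪gradient u y, f y⟫) x₀)
    (hψ : DifferentiableAt ℝ (fun y => ⟪gradient u y, g y⟫) x₀)
    (hX : ∀ t > 0, IsSwitchTraj f g t x₀ (X t)) :
    (fun t => u (X t (2 * t)) - u x₀ - t * (⟪gradient u x₀, f x₀⟫ + ⟪gradient u x₀, g x₀⟫) -
        t ^ 2 * (H2 f f u x₀ / 2 + H2 f g u x₀ + H2 g g u x₀ / 2))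
      =o[𝓝[>] 0] fun t => t ^ 2 := by
  obtain ⟨hdev₁, hdev₂⟩ := isLittleO_switchTraj_sub_brokenLine hf hg hX
  have harc₁ := isLittleO_sq_of_hasDerivAt_arc (a := fun _ => 0) (b := id)
    (α := fun _ => ⟪gradient u x₀, f x₀⟫) (β := H2 f f u x₀)
    (h := fun t s => u (X t s)) (h' := fun t s => ⟪gradient u (X t s), f (X t s)⟫)
    (fun t => sub_zero t)
    (fun t ht => hu.continuous.comp_continuousOn
      ((hX t ht).2.1.mono (Icc_subset_Icc le_rfl (by rw [id]; linarith))))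
    (fun t ht s hs => (hu _).hasDerivAt_comp_inner_gradient ((hX t ht).2.2.1 s hs))
    ((hφ.hasFDerivAt.isLittleO_sub_sub_comp hdev₁ (isBigO_smul_arcFilter _)
      (tendsto_fst_arcFilter _)).congr_left fun p => by
        simp only [map_smul, smul_eq_mul, H2]; ring)
  have harc₂ := isLittleO_sq_of_hasDerivAt_arc (a := id) (b := fun t => 2 * t)
    (α := fun t => ⟪gradient u x₀, g x₀⟫ + t * H2 f g u x₀) (β := H2 g g u x₀)
    (h := fun t s => u (X t s)) (h' := fun t s => ⟪gradient u (X t s), g (X t s)⟫)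
    (fun t => by simp only [id]; ring)
    (fun t ht => hu.continuous.comp_continuousOn
      ((hX t ht).2.1.mono (Icc_subset_Icc ht.le le_rfl)))
    (fun t ht s hs => (hu _).hasDerivAt_comp_inner_gradient ((hX t ht).2.2.2 s hs))
    ((hψ.hasFDerivAt.isLittleO_sub_sub_comp hdev₂ (isBigO_brokenLine_arcFilter _ _)
      (tendsto_fst_arcFilter _)).congr_left fun p => by
        simp only [map_add, map_smul, smul_eq_mul, H2, id]; ring)
  refine (harc₁.add harc₂).congr' ?_ EventuallyEq.rfl
  filter_upwards [self_mem_nhdsWithin] with t (ht : 0 < t)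
  simp only [id, (hX t ht).1]
  ring

end

section

variable {n m : ℕ}

theorem ContDiff.differentiable_inner_gradient {u : Euc n → ℝ} {f : Euc n → Euc n}
    (hu : ContDiff ℝ 2 u) (hf : ContDiff ℝ 1 f) :
    Differentiable ℝ fun y => ⟪gradient u y, f y⟫ := by
  simp only [inner_gradient_left]
  exact ((hu.fderiv_right (by norm_num)).clm_apply hf).differentiable (by norm_num)

theorem Smat_mulVec_dotProduct {σ : Fin m → Euc n → Euc n} {u : Euc n → ℝ} {x : Euc n}
    (hσ : ∀ i, DifferentiableAt ℝ (fun y => ⟪gradient u y, σ i y⟫) x) (b c : Fin m → ℝ) :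
    Smat σ u x *ᵥ b ⬝ᵥ c =
      H2 (fun y => ∑ j, b j • σ j y) (fun y => ∑ j, c j • σ j y) u x := by
  have hsum : (fun y => ⟪gradient u y, ∑ j, c j • σ j y⟫) =
      fun y => ∑ i, c i * ⟪gradient u y, σ i y⟫ := by
    funext y; simp [inner_sum, inner_smul_right]
  rw [H2, hsum, fderiv_fun_sum fun i _ => (hσ i).const_mul (c i)]
  simp only [_root_.sum_apply, fderiv_const_mul (hσ _), _root_.smul_apply,
    smul_eq_mul, map_sum, map_smul, Smat, dotProduct, mulVec, of_apply, Finset.mul_sum,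
    Finset.sum_mul]
  rw [Finset.sum_comm]
  exact Finset.sum_congr rfl fun _ _ => Finset.sum_congr rfl fun _ _ => by ring

theorem Kof_mulVec_dotProduct (S : Matrix (Fin m) (Fin m) ℝ) (a b : Fin m → ℝ) :
    Kof S *ᵥ Sum.elim a b ⬝ᵥ Sum.elim a b = S *ᵥ a ⬝ᵥ a + 2 * (S *ᵥ a ⬝ᵥ b) + S *ᵥ b ⬝ᵥ b := by
  rw [Kof, fromBlocks_mulVec, sumElim_dotProduct_sumElim]
  simp only [Sum.elim_comp_inl, Sum.elim_comp_inr, add_mulVec, smul_mulVec, add_dotProduct,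
    smul_dotProduct, smul_eq_mul, mulVec_transpose, ← dotProduct_mulVec]
  rw [dotProduct_comm a (S *ᵥ a), dotProduct_comm b (S *ᵥ b), dotProduct_comm b (S *ᵥ a)]
  ring

end

theorem statement11_general {n m : ℕ} (σ : Fin m → Euc n → Euc n) (hσ : ∀ j, ContDiff ℝ 1 (σ j))
    (u : Euc n → ℝ) (hu : ContDiff ℝ 2 u)
    (a₁ a₂ : Euc m) (x₀ : Euc n)
    (X : ℝ → ℝ → Euc n)
    (hX : ∀ t > (0 : ℝ),
      IsSwitchTraj (fun y => ∑ j, a₁ j • σ j y) (fun y => ∑ j, a₂ j • σ j y) t x₀ (X t)) :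
    ((fun t : ℝ => u (X t (2 * t)) - u x₀ -
        t * ⟪gradient u x₀, ∑ j, (a₁ j + a₂ j) • σ j x₀⟫ -
        t ^ 2 / 2 * (Kmat σ u x₀ *ᵥ Sum.elim (fun i => a₁ i) (fun i => a₂ i) ⬝ᵥ
          Sum.elim (fun i => a₁ i) (fun i => a₂ i)))
      =o[𝓝[>] (0 : ℝ)] fun t => t ^ 2) ∧
    ((⟪gradient u x₀, ∑ j, a₁ j • σ j x₀⟫ = 0 ∧ ⟪gradient u x₀, ∑ j, a₂ j • σ j x₀⟫ = 0) →
      (fun t : ℝ => u (X t (2 * t)) - u x₀ -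
          t ^ 2 / 2 * (Kmat σ u x₀ *ᵥ Sum.elim (fun i => a₁ i) (fun i => a₂ i) ⬝ᵥ
            Sum.elim (fun i => a₁ i) (fun i => a₂ i)))
        =o[𝓝[>] (0 : ℝ)] fun t => t ^ 2) := by
  set f : Euc n → Euc n := fun y => ∑ j, a₁ j • σ j y
  set g : Euc n → Euc n := fun y => ∑ j, a₂ j • σ j y
  have hf : ContDiff ℝ 1 f := ContDiff.sum fun j _ => (hσ j).const_smul (a₁ j)
  have hg : ContDiff ℝ 1 g := ContDiff.sum fun j _ => (hσ j).const_smul (a₂ j)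
  have hexp := isLittleO_switchTraj_expansion hf.continuous.continuousAt hg.continuous.continuousAt
    (hu.differentiable (by norm_num)) (hu.differentiable_inner_gradient hf x₀)
    (hu.differentiable_inner_gradient hg x₀) hX
  have hlin : ⟪gradient u x₀, ∑ j, (a₁ j + a₂ j) • σ j x₀⟫ =
      ⟪gradient u x₀, f x₀⟫ + ⟪gradient u x₀, g x₀⟫ := by
    simp only [f, g, add_smul, Finset.sum_add_distrib, inner_add_right]
  have hK : Kmat σ u x₀ *ᵥ Sum.elim (fun i => a₁ i) (fun i => a₂ i) ⬝ᵥ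
      Sum.elim (fun i => a₁ i) (fun i => a₂ i) = H2 f f u x₀ + 2 * H2 f g u x₀ + H2 g g u x₀ := by
    have hσ' i := hu.differentiable_inner_gradient (hσ i) x₀
    rw [Kmat, Kof_mulVec_dotProduct, Smat_mulVec_dotProduct hσ', Smat_mulVec_dotProduct hσ',
      Smat_mulVec_dotProduct hσ']
  refine ⟨hexp.congr_left fun t => by rw [hlin, hK]; ring,
    fun ⟨h₁, h₂⟩ => hexp.congr_left fun t => ?_⟩
  rw [hK, show ⟪gradient u x₀, f x₀⟫ = 0 from h₁, show ⟪gradient u x₀, g x₀⟫ = 0 from h₂]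
  ring

/-- Proposition 4.3: expansion of `u` along a single-switch trajectory of a
symmetric system, via the quadratic form of the matrix `K(x₀)`, with the particular case of
tangent vector fields. -/
theorem statement11 {n m : ℕ} (σ : Fin m → Euc n → Euc n) (hσ : ∀ j, ContDiff ℝ 1 (σ j))
    (u : Euc n → ℝ) (hu : ContDiff ℝ 2 u)
    (a₁ a₂ : Euc m) (ha₁ : ‖a₁‖ ≤ 1) (ha₂ : ‖a₂‖ ≤ 1) (x₀ : Euc n)
    (X : ℝ → ℝ → Euc n)
    (hX : ∀ t > (0 : ℝ),
      IsSwitchTraj (fun y => ∑ j, a₁ j • σ j y) (fun y => ∑ j, a₂ j • σ j y) t x₀ (X t)) :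
    ((fun t : ℝ => u (X t (2 * t)) - u x₀ -
        t * ⟪gradient u x₀, ∑ j, (a₁ j + a₂ j) • σ j x₀⟫ -
        t ^ 2 / 2 * (Kmat σ u x₀ *ᵥ Sum.elim (fun i => a₁ i) (fun i => a₂ i) ⬝ᵥ
          Sum.elim (fun i => a₁ i) (fun i => a₂ i)))
      =o[𝓝[>] (0 : ℝ)] fun t => t ^ 2) ∧
    ((⟪gradient u x₀, ∑ j, a₁ j • σ j x₀⟫ = 0 ∧ ⟪gradient u x₀, ∑ j, a₂ j • σ j x₀⟫ = 0) →
      (fun t : ℝ => u (X t (2 * t)) - u x₀ -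
          t ^ 2 / 2 * (Kmat σ u x₀ *ᵥ Sum.elim (fun i => a₁ i) (fun i => a₂ i) ⬝ᵥ
            Sum.elim (fun i => a₁ i) (fun i => a₂ i)))
        =o[𝓝[>] (0 : ℝ)] fun t => t ^ 2) :=
  statement11_general σ hσ u hu a₁ a₂ x₀ X hX
end

section
/- Let S be a real m×m matrix, S* = (S + ᵗS)/2 its symmetric part, and K the symmetric 2m×2m block matrix K = [[S*, ᵗS],[S, S*]]. Then K is positive semidefinite if and only if S is symmetric and positive semidefinite. In particular, if S is not both symmetric and positive semidefinite, then K has a negative eigenvalue. -/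
open Set Filter Metric Matrix MeasureTheory Asymptotics
open scoped RealInnerProductSpace ENNReal Topology

/-! The quadratic form of `K` at `(a, b)` is `q(a + b) + ω(a, b)`, where `q(x) = Sx·x` and
`ω(a, b) = (S - ᵗS)a·b`. If `S` is symmetric, `ω = 0` and `K` inherits
positivity from `q`. Conversely, at `(a, tc - a)` the form is `t² q(c) + t ω(a, c)`, which can only
stay nonnegative for all real `t` if `ω(a, c) = 0`; hence `S` is symmetric, and `b = a` gives
`4 q(a) ≥ 0`. A symmetric matrix that is not positive semidefinite has a negative eigenvalue. -/

theorem Matrix.transpose_mulVec_dotProduct {n R : Type*} [Fintype n] [CommSemiring R]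
    (S : Matrix n n R) (x y : n → R) : Sᵀ *ᵥ x ⬝ᵥ y = S *ᵥ y ⬝ᵥ x := by
  rw [mulVec_transpose, ← dotProduct_mulVec, dotProduct_comm]

theorem eq_zero_of_forall_mul_mul_self_add_mul_nonneg {K : Type*} [Field K] [LinearOrder K]
    [IsStrictOrderedRing K] {a b : K} (h : ∀ t : K, 0 ≤ a * (t * t) + b * t) : b = 0 := by
  have hdiscrim : discrim a b 0 ≤ 0 := discrim_le_zero fun t => by simpa using h t
  rw [discrim, mul_zero, sub_zero] at hdiscrim
  exact pow_eq_zero_iff two_ne_zero |>.mp (le_antisymm hdiscrim (sq_nonneg b))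

theorem Kof_mulVec_sumElim_dotProduct {m : ℕ} (S : Matrix (Fin m) (Fin m) ℝ) (a b : Fin m → ℝ) :
    Kof S *ᵥ Sum.elim a b ⬝ᵥ Sum.elim a b = S *ᵥ (a + b) ⬝ᵥ (a + b) + (S - Sᵀ) *ᵥ a ⬝ᵥ b := by
  rw [Kof, fromBlocks_mulVec, sumElim_dotProduct_sumElim]
  simp only [add_mulVec, sub_mulVec, smul_mulVec, mulVec_add, add_dotProduct, sub_dotProduct,
    dotProduct_add, smul_dotProduct, smul_eq_mul, Sum.elim_comp_inl, Sum.elim_comp_inr,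
    transpose_mulVec_dotProduct]
  ring

theorem Kof_mulVec_sumElim_sub_dotProduct {m : ℕ} (S : Matrix (Fin m) (Fin m) ℝ)
    (a c : Fin m → ℝ) (t : ℝ) :
    Kof S *ᵥ Sum.elim a (t • c - a) ⬝ᵥ Sum.elim a (t • c - a) =
      (S *ᵥ c ⬝ᵥ c) * (t * t) + ((S - Sᵀ) *ᵥ a ⬝ᵥ c) * t := by
  rw [Kof_mulVec_sumElim_dotProduct, add_sub_cancel]
  simp only [mulVec_smul, dotProduct_sub, dotProduct_smul, smul_dotProduct, smul_eq_mul,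
    sub_mulVec, sub_dotProduct, transpose_mulVec_dotProduct]
  ring

theorem Kof_mulVec_sumElim_self_dotProduct {m : ℕ} (S : Matrix (Fin m) (Fin m) ℝ)
    (a : Fin m → ℝ) : Kof S *ᵥ Sum.elim a a ⬝ᵥ Sum.elim a a = 4 * (S *ᵥ a ⬝ᵥ a) := by
  rw [Kof_mulVec_sumElim_dotProduct, sub_mulVec, sub_dotProduct, transpose_mulVec_dotProduct]
  simp only [mulVec_add, add_dotProduct, dotProduct_add]
  ring

theorem isSymm_of_forall_Kof_nonneg {m : ℕ} {S : Matrix (Fin m) (Fin m) ℝ}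
    (hK : ∀ v, 0 ≤ Kof S *ᵥ v ⬝ᵥ v) : S.IsSymm := by
  have hskew : ∀ a c, (S - Sᵀ) *ᵥ a ⬝ᵥ c = 0 := fun a c =>
    eq_zero_of_forall_mul_mul_self_add_mul_nonneg fun t =>
      Kof_mulVec_sumElim_sub_dotProduct S a c t ▸ hK _
  ext i j
  simpa [sub_mulVec, mulVec_single, dotProduct_single, sub_eq_zero] using
    hskew (Pi.single i 1) (Pi.single j 1)

theorem forall_Kof_nonneg_iff {m : ℕ} (S : Matrix (Fin m) (Fin m) ℝ) :
    (∀ v, 0 ≤ Kof S *ᵥ v ⬝ᵥ v) ↔ S.IsSymm ∧ ∀ a, 0 ≤ S *ᵥ a ⬝ᵥ a := by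
  constructor
  · intro hK
    refine ⟨isSymm_of_forall_Kof_nonneg hK, fun a => ?_⟩
    have := hK (Sum.elim a a)
    rw [Kof_mulVec_sumElim_self_dotProduct] at this
    linarith
  · rintro ⟨hsymm, hS⟩ v
    rw [← Sum.elim_comp_inl_inr v, Kof_mulVec_sumElim_dotProduct, hsymm.eq, sub_self,
      zero_mulVec, zero_dotProduct, add_zero]
    exact hS _

theorem Kof_isHermitian {m : ℕ} (S : Matrix (Fin m) (Fin m) ℝ) : (Kof S).IsHermitian := by
  rw [IsHermitian, conjTranspose_eq_transpose_of_trivial]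
  refine IsSymm.fromBlocks ?_ rfl ?_ <;>
    simp [IsSymm, transpose_smul, transpose_add, add_comm]

theorem Matrix.IsHermitian.exists_neg_eigenvalue_of_not_forall_nonneg {n : Type*} [Fintype n]
    [DecidableEq n] {A : Matrix n n ℝ} (hA : A.IsHermitian) (h : ¬∀ v, 0 ≤ A *ᵥ v ⬝ᵥ v) :
    ∃ lam < (0 : ℝ), ∃ v ≠ 0, A *ᵥ v = lam • v := by
  obtain ⟨i, hi⟩ : ∃ i, hA.eigenvalues i < 0 := by
    by_contra! hnonneg
    have hpsd := hA.posSemidef_iff_eigenvalues_nonneg.mpr hnonneg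
    exact h fun v => by simpa [dotProduct_comm] using hpsd.dotProduct_mulVec_nonneg v
  exact ⟨_, hi, _, (WithLp.ofLp_eq_zero (p := 2)).not.mpr
    (hA.eigenvectorBasis.orthonormal.ne_zero i), hA.mulVec_eigenvectorBasis i⟩

/-- Theorem 4.6: `K` is positive semidefinite if and only if `S` is symmetric
and positive semidefinite; in particular if `S` is not both symmetric and positive semidefinite
then `K` has a negative eigenvalue. -/
theorem statement14 {m : ℕ} (S : Matrix (Fin m) (Fin m) ℝ) :
    ((∀ v : Fin m ⊕ Fin m → ℝ, 0 ≤ Kof S *ᵥ v ⬝ᵥ v) ↔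
      S.IsSymm ∧ ∀ a : Fin m → ℝ, 0 ≤ S *ᵥ a ⬝ᵥ a) ∧
    (¬(S.IsSymm ∧ ∀ a : Fin m → ℝ, 0 ≤ S *ᵥ a ⬝ᵥ a) →
      ∃ lam < (0 : ℝ), ∃ v ≠ 0, Kof S *ᵥ v = lam • v) :=
  ⟨forall_Kof_nonneg_iff S, fun hS =>
    (Kof_isHermitian S).exists_neg_eigenvalue_of_not_forall_nonneg
      ((forall_Kof_nonneg_iff S).not.mpr hS)⟩
end
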